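/- The Legendre transform of the log-moment generating function of the square of a standard Gaussian equals I(x) = (1/2)(x − 1 − log x) for x > 0 and +∞ for x ≤ 0. That is, sup_{t ∈ ℝ} { t·x − Λ(t) } = I(x), where Λ(t) = −(1/2)log(1 − 2t) for t < 1/2 and Λ(t) = +∞ for t ≥ 1/2. -/
import Mathlib


open Real

noncomputable def chiSqLogMGF : ℝ → EReal := fun t =>
  if t < 1 / 2 then ((-(1 / 2) * Real.log (1 - 2 * t) : ℝ) : EReal) else ⊤

noncomputable def chiSqRate : ℝ → EReal := fun x =>
  if 0 < x then (((1 / 2) * (x - 1 - Real.log x) : ℝ) : EReal) else ⊤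

lemma chiSq_key (x t : ℝ) (hx : 0 < x) (ht : t < 1/2) :
    t * x - (-(1/2) * Real.log (1 - 2*t)) ≤ (1/2)*(x - 1 - Real.log x) := by
  have h1 : 0 < 1 - 2*t := by linarith
  have h := Real.log_le_sub_one_of_pos (mul_pos h1 hx)
  rw [Real.log_mul (ne_of_gt h1) (ne_of_gt hx)] at h
  nlinarith [h]

theorem legendre_transform_chi_sq (x : ℝ) :
    (⨆ t : ℝ, ((t * x : ℝ) : EReal) - chiSqLogMGF t) = chiSqRate x := by
  unfold chiSqRate
  by_cases hx : 0 < x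
  · rw [if_pos hx]
    apply le_antisymm
    · apply iSup_le
      intro t
      unfold chiSqLogMGF
      split_ifs with ht
      · rw [← EReal.coe_sub, EReal.coe_le_coe_iff]
        exact chiSq_key x t hx ht
      · simp [sub_eq_add_neg]
    · set t₀ := (1 - 1/x)/2 with ht₀
      refine le_iSup_of_le t₀ ?_
      have ht : t₀ < 1/2 := by
        rw [ht₀]
        have : 0 < 1/x := by positivity
        linarith
      unfold chiSqLogMGF
      rw [if_pos ht, ← EReal.coe_sub, EReal.coe_le_coe_iff]
      have h1 : 1 - 2 * t₀ = 1/x := by rw [ht₀]; ring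
      rw [h1, Real.log_div one_ne_zero (ne_of_gt hx), Real.log_one]
      have : t₀ * x = (x - 1)/2 := by
        rw [ht₀]; field_simp
      rw [this]; ring_nf; rfl
  · rw [if_neg hx]
    rw [eq_top_iff, top_le_iff, iSup_eq_top]
    intro b hb
    push_neg at hx
    induction b using EReal.rec with
    | bot =>
      refine ⟨0, ?_⟩
      unfold chiSqLogMGF
      norm_num
    | coe r =>
      set t := (1 - Real.exp (2 * max r 0 + 2))/2 with htdef
      refine ⟨t, ?_⟩
      have hexp : 0 < Real.exp (2 * max r 0 + 2) := Real.exp_pos _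
      have hexp1 : 1 ≤ Real.exp (2 * max r 0 + 2) := by
        apply Real.one_le_exp; positivity
      have ht : t < 1/2 := by rw [htdef]; linarith
      have ht0 : t ≤ 0 := by rw [htdef]; linarith
      unfold chiSqLogMGF
      rw [if_pos ht, ← EReal.coe_sub, EReal.coe_lt_coe_iff]
      have h1 : 1 - 2 * t = Real.exp (2 * max r 0 + 2) := by rw [htdef]; ring
      rw [h1, Real.log_exp]
      have htx : 0 ≤ t * x := by nlinarith
      have : r ≤ max r 0 := le_max_left _ _
      nlinarith
    | top => exact absurd hb (lt_irrefl _)
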